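/- Raabe's multiplication formula: for all n ≥ 0, m ≥ 1, and real x, ∑_{k=0}^{m-1} B_n(x + k/m) = m^{1-n} · B_n(m·x). -/

import Mathlib

/-!
Raabe's formula is an identity of exponential generating functions. Put
`G_t(T) = ∑ Bₙ(t) Tⁿ/n! = T e^{tT} / (e^T - 1)` and `E = e^{T/m}`. Since
`(∑_{k<m} Eᵏ)(E - 1) = Eᵐ - 1 = e^T - 1`,
`∑_{k<m} G_{x+k/m}(T) = T e^{xT} (∑_{k<m} Eᵏ) / (e^T - 1) = T e^{xT} / (E - 1)`,
which is `m · G_{mx}(T/m)`.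
In `K⟦X⟧` the divisions become cancellations of the nonzero factors `e^T - 1` and `E - 1`;
comparing the coefficients of `Tⁿ` gives the formula.
-/

noncomputable def B (n : ℕ) (x : ℝ) : ℝ :=
  ∑ j ∈ Finset.range (n + 1), (n.choose j : ℝ) * (bernoulli j : ℝ) * x ^ (n - j)

open PowerSeries Finset
open scoped Nat

section

variable {K : Type*} [Field K] [CharZero K]

noncomputable def bernoulliEGF (t : K) : K⟦X⟧ :=
  mk fun n => Polynomial.aeval t ((1 / n ! : ℚ) • Polynomial.bernoulli n)

lemma coeff_bernoulliEGF (t : K) (n : ℕ) :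
    coeff n (bernoulliEGF t) = (n ! : K)⁻¹ * Polynomial.aeval t (Polynomial.bernoulli n) := by
  simp [bernoulliEGF, Algebra.smul_def]

lemma bernoulliEGF_mul_exp_sub_one (t : K) :
    bernoulliEGF t * (exp K - 1) = X * rescale t (exp K) :=
  Polynomial.bernoulli_generating_function t

lemma rescale_natCast_mul_exp (k : ℕ) (a : K) :
    rescale (k * a) (exp K) = rescale a (exp K) ^ k := by
  rw [rescale_mul, RingHom.comp_apply, ← exp_pow_eq_rescale_exp, map_pow]

lemma rescale_exp_sub_one_ne_zero {a : K} (ha : a ≠ 0) : rescale a (exp K) - 1 ≠ 0 :=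
  fun h => ha (by simpa [coeff_rescale, coeff_exp] using congrArg (coeff 1) h)

theorem sum_bernoulliEGF_add_div (m : ℕ) (hm : (m : K) ≠ 0) (x : K) :
    ∑ k ∈ range m, bernoulliEGF (x + k / m) =
      (m : K) • rescale (m : K)⁻¹ (bernoulliEGF (m * x)) := by
  set E := rescale (m : K)⁻¹ (exp K)
  have hE : E ^ m = exp K := by
    rw [← rescale_natCast_mul_exp, mul_inv_cancel₀ hm, rescale_one, RingHom.id_apply]
  have hsum : (∑ k ∈ range m, bernoulliEGF (x + k / m)) * (exp K - 1) =
      X * rescale x (exp K) * ∑ k ∈ range m, E ^ k := by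
    simp_rw [Finset.sum_mul, bernoulliEGF_mul_exp_sub_one, ← exp_mul_exp_eq_exp_add,
      div_eq_mul_inv, rescale_natCast_mul_exp, Finset.mul_sum, mul_assoc, E]
  have hscaled : (m : K) • rescale (m : K)⁻¹ (bernoulliEGF (m * x)) * (E - 1) =
      X * rescale x (exp K) := by
    have h := congrArg (rescale (m : K)⁻¹) (bernoulliEGF_mul_exp_sub_one ((m : K) * x))
    rw [map_mul, map_mul, map_sub, map_one, rescale_X, rescale_rescale,
      mul_right_comm (m : K), mul_inv_cancel₀ hm, one_mul] at h
    rw [smul_mul_assoc, h, smul_eq_C_mul, ← mul_assoc, ← mul_assoc, ← map_mul,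
      mul_inv_cancel₀ hm, map_one, one_mul]
  have hne : (exp K - 1) * (E - 1) ≠ 0 := by
    refine mul_ne_zero ?_ (rescale_exp_sub_one_ne_zero (inv_ne_zero hm))
    simpa using rescale_exp_sub_one_ne_zero (one_ne_zero (α := K))
  apply mul_right_cancel₀ hne
  rw [← mul_assoc, hsum, mul_assoc, geom_sum_mul, hE, ← hscaled]
  ring

theorem sum_aeval_bernoulli_add_div (n m : ℕ) (hm : (m : K) ≠ 0) (x : K) :
    ∑ k ∈ range m, Polynomial.aeval (x + k / m) (Polynomial.bernoulli n) =
      (m : K) ^ ((1 : ℤ) - n) * Polynomial.aeval (m * x) (Polynomial.bernoulli n) := by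
  have h := congrArg (coeff n) (sum_bernoulliEGF_add_div m hm x)
  simp only [map_sum, coeff_bernoulliEGF, coeff_smul, coeff_rescale, ← Finset.mul_sum,
    smul_eq_mul] at h
  rw [zpow_sub₀ hm, zpow_one, zpow_natCast, div_eq_mul_inv, ← inv_pow]
  have hfact : (n ! : K)⁻¹ ≠ 0 := inv_ne_zero (Nat.cast_ne_zero.mpr n.factorial_ne_zero)
  apply mul_left_cancel₀ hfact
  rw [h]
  ring

end

lemma B_eq_aeval_bernoulli (n : ℕ) (x : ℝ) :
    B n x = Polynomial.aeval x (Polynomial.bernoulli n) := by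
  simp only [B, Polynomial.bernoulli, map_sum, Polynomial.aeval_monomial, eq_ratCast]
  refine Finset.sum_congr rfl fun j _ => ?_
  push_cast
  ring

theorem bernoulli_raabe (n m : ℕ) (hm : 1 ≤ m) (x : ℝ) :
    ∑ k ∈ Finset.range m, B n (x + k / m) = (m : ℝ) ^ ((1 : ℤ) - n) * B n (m * x) := by
  simp only [B_eq_aeval_bernoulli]
  exact sum_aeval_bernoulli_add_div n m (Nat.cast_ne_zero.mpr (by omega)) x
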